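/- Let X ⊂ [0,1] be the standard middle-thirds Cantor set. Then there is d₀ = 1/4 such that for every x ∈ X and every sufficiently small r > 0, the convex density satisfies d_X(x,r) ≥ 1/4, where d_X(x,r) is the diameter of the convex hull of X ∩ B(x,r) divided by 2r. -/
import Mathlib


open Metric MeasureTheory Filter Set

noncomputable section

/-- An affine line in a real normed space. -/
def IsLine {E : Type*} [NormedAddCommGroup E] [NormedSpace ℝ E] (L : Set E) : Prop :=
  ∃ a v : E, v ≠ 0 ∧ L = {p | ∃ t : ℝ, p = a + t • v}

/-- The Jones `β`-number of `K` at `x` and scale `r`: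
`inf` over affine lines `L` of `sup_{z ∈ K ∩ B(x,r)} dist(z, L) / r`. -/
noncomputable def betaNum {E : Type*} [NormedAddCommGroup E] [NormedSpace ℝ E]
    (K : Set E) (x : E) (r : ℝ) : ℝ :=
  sInf ((fun L => sSup ((fun z => infDist z L) '' (K ∩ closedBall x r)) / r) ''
    {L : Set E | IsLine L})

/-- The generation-`n` approximation of the middle-thirds Cantor set. -/
def preCantor : ℕ → Set ℝ
  | 0 => Icc 0 1
  | n + 1 => (fun x => x / 3) '' preCantor n ∪ (fun x => (x + 2) / 3) '' preCantor n

/-- The middle-thirds Cantor set. -/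
def triadicCantor : Set ℝ := ⋂ n, preCantor n

/-- The convex density of `K` at `x` and scale `r`. -/
noncomputable def convDens (K : Set ℝ) (x : ℝ) (r : ℝ) : ℝ :=
  Metric.diam (convexHull ℝ (K ∩ closedBall x r)) / (2 * r)

lemma preCantor_subset_Icc : ∀ n, preCantor n ⊆ Icc 0 1 := by
  intro n
  induction n with
  | zero => exact subset_rfl
  | succ n ih =>
    rintro x (⟨y, hy, rfl⟩ | ⟨y, hy, rfl⟩) <;>
    · obtain ⟨h0, h1⟩ := ih hy
      constructor <;> simp only <;> linarith

lemma mem_div3 {x : ℝ} (hx : x ∈ triadicCantor) : x / 3 ∈ triadicCantor := by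
  rw [triadicCantor, mem_iInter] at *
  intro n
  cases n with
  | zero =>
    obtain ⟨h0, h1⟩ := preCantor_subset_Icc 0 (hx 0)
    exact ⟨by linarith, by linarith⟩
  | succ n => exact Or.inl ⟨x, hx n, rfl⟩

lemma mem_add_two_div3 {x : ℝ} (hx : x ∈ triadicCantor) : (x + 2) / 3 ∈ triadicCantor := by
  rw [triadicCantor, mem_iInter] at *
  intro n
  cases n with
  | zero =>
    obtain ⟨h0, h1⟩ := preCantor_subset_Icc 0 (hx 0)
    exact ⟨by linarith, by linarith⟩
  | succ n => exact Or.inr ⟨x, hx n, rfl⟩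

lemma zero_mem : (0 : ℝ) ∈ triadicCantor := by
  rw [triadicCantor, mem_iInter]
  intro n
  induction n with
  | zero => exact ⟨le_refl 0, zero_le_one⟩
  | succ n ih => exact Or.inl ⟨0, ih, by norm_num⟩

lemma one_mem : (1 : ℝ) ∈ triadicCantor := by
  rw [triadicCantor, mem_iInter]
  intro n
  induction n with
  | zero => exact ⟨zero_le_one, le_refl 1⟩
  | succ n ih => exact Or.inr ⟨1, ih, by norm_num⟩

lemma cantor_split {x : ℝ} (hx : x ∈ triadicCantor) :
    (3 * x ∈ triadicCantor ∧ x ≤ 1 / 3) ∨ (3 * x - 2 ∈ triadicCantor ∧ 2 / 3 ≤ x) := by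
  have h1 := mem_iInter.1 hx 1
  have hcase : x ≤ 1 / 3 ∨ 2 / 3 ≤ x := by
    rcases h1 with ⟨y, hy, rfl⟩ | ⟨y, hy, rfl⟩
    · left; have := (preCantor_subset_Icc 0 hy).2; simp only; linarith
    · right; have := (preCantor_subset_Icc 0 hy).1; simp only; linarith
  rcases hcase with hle | hge
  · left
    refine ⟨mem_iInter.2 fun n => ?_, hle⟩
    have hn := mem_iInter.1 hx (n + 1)
    rcases hn with ⟨y, hy, hxy⟩ | ⟨y, hy, hxy⟩
    · have : 3 * x = y := by simp only at hxy; linarith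
      exact this ▸ hy
    · exfalso
      have := (preCantor_subset_Icc n hy).1
      simp only at hxy; linarith
  · right
    refine ⟨mem_iInter.2 fun n => ?_, hge⟩
    have hn := mem_iInter.1 hx (n + 1)
    rcases hn with ⟨y, hy, hxy⟩ | ⟨y, hy, hxy⟩
    · exfalso
      have := (preCantor_subset_Icc n hy).2
      simp only at hxy; linarith
    · have : 3 * x - 2 = y := by simp only at hxy; linarith
      exact this ▸ hy

/-- Key structural lemma: every point of the Cantor set lies in a generation-(n+1)
interval whose endpoints are in the Cantor set, with a sibling point at distance
`2 L` on one side. -/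
lemma cantor_key : ∀ n : ℕ, ∀ x ∈ triadicCantor, ∃ a : ℝ,
    a ∈ triadicCantor ∧ a + (1/3)^(n+1) ∈ triadicCantor ∧
    a ≤ x ∧ x ≤ a + (1/3)^(n+1) ∧
    (a + 2 * (1/3)^(n+1) ∈ triadicCantor ∨ a - (1/3)^(n+1) ∈ triadicCantor) := by
  intro n
  induction n with
  | zero =>
    intro x hx
    rcases cantor_split hx with ⟨h3x, hle⟩ | ⟨h3x, hge⟩
    · refine ⟨0, zero_mem, ?_, ?_, ?_, Or.inl ?_⟩
      · have := mem_div3 one_mem; norm_num at this ⊢; exact this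
      · have := (preCantor_subset_Icc 0 (mem_iInter.1 hx 0)).1; linarith
      · norm_num; linarith
      · have := mem_add_two_div3 zero_mem; norm_num at this ⊢; exact this
    · refine ⟨2/3, ?_, ?_, ?_, ?_, Or.inr ?_⟩
      · have := mem_add_two_div3 zero_mem; norm_num at this ⊢; exact this
      · have := mem_add_two_div3 one_mem; norm_num at this ⊢; exact this
      · linarith
      · have := (preCantor_subset_Icc 0 (mem_iInter.1 hx 0)).2; norm_num; linarith
      · have := mem_div3 one_mem; norm_num at this ⊢; exact this
  | succ n ih =>
    intro x hx
    have hL : ((1:ℝ)/3)^(n+1+1) = (1/3)^(n+1) / 3 := by ring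
    rcases cantor_split hx with ⟨h3x, _⟩ | ⟨h3x, _⟩
    · obtain ⟨a, ha, haL, hax, hxa, hdisj⟩ := ih (3 * x) h3x
      refine ⟨a / 3, mem_div3 ha, ?_, by linarith, by rw [hL]; linarith, ?_⟩
      · have := mem_div3 haL; rw [hL]; convert this using 1; ring
      · rcases hdisj with h | h
        · left; have := mem_div3 h; rw [hL]; convert this using 1; ring
        · right; have := mem_div3 h; rw [hL]; convert this using 1; ring
    · obtain ⟨a, ha, haL, hax, hxa, hdisj⟩ := ih (3 * x - 2) h3x
      refine ⟨(a + 2) / 3, mem_add_two_div3 ha, ?_, by linarith, by rw [hL]; linarith, ?_⟩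
      · have := mem_add_two_div3 haL; rw [hL]; convert this using 1; ring
      · rcases hdisj with h | h
        · left; have := mem_add_two_div3 h; rw [hL]; convert this using 1; ring
        · right; have := mem_add_two_div3 h; rw [hL]; convert this using 1; ring

lemma cantor_two_points {x : ℝ} (hx : x ∈ triadicCantor) {r : ℝ} (hr : 0 < r) (hr1 : r < 1) :
    ∃ p q : ℝ, p ∈ triadicCantor ∧ q ∈ triadicCantor ∧ p ≤ x ∧ x ≤ q ∧
      q - p ≤ r ∧ r / 2 ≤ q - p := by
  -- find minimal m with (1/3)^m ≤ r
  have hne : ∃ m : ℕ, ((1:ℝ)/3)^m ≤ r := by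
    obtain ⟨m, hm⟩ := exists_pow_lt_of_lt_one hr (by norm_num : (1:ℝ)/3 < 1)
    exact ⟨m, hm.le⟩
  classical
  set m := Nat.find hne with hm
  have hmle : ((1:ℝ)/3)^m ≤ r := Nat.find_spec hne
  have hmpos : m ≠ 0 := by
    intro h
    rw [h] at hmle; norm_num at hmle; linarith
  obtain ⟨k, hk⟩ : ∃ k, m = k + 1 := ⟨m - 1, (Nat.succ_pred_eq_of_pos (Nat.pos_of_ne_zero hmpos)).symm⟩
  have hlt : r < ((1:ℝ)/3)^k := lt_of_not_ge (Nat.find_min hne (by omega))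
  rw [hk] at hmle
  set L : ℝ := ((1:ℝ)/3)^(k+1) with hLdef
  have hLpos : 0 < L := by positivity
  have h3L : ((1:ℝ)/3)^k = 3 * L := by rw [hLdef]; ring
  rw [h3L] at hlt
  obtain ⟨a, ha, haL, hax, hxa, hdisj⟩ := cantor_key k x hx
  rcases le_or_gt (2 * L) r with h2L | h2L
  · -- r ≥ 2L: use separation 2L
    rcases hdisj with h | h
    · exact ⟨a, a + 2 * L, ha, h, hax, by linarith, by linarith, by linarith⟩
    · exact ⟨a - L, a + L, h, haL, by linarith, hxa, by linarith, by linarith⟩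
  · -- r < 2L: use the interval of length L itself
    exact ⟨a, a + L, ha, haL, hax, hxa, by linarith, by linarith⟩

/-- at every point of the middle-thirds Cantor set `X`, the convex
density satisfies `d_X(x,r) ≥ 1/4` for all sufficiently small `r > 0`. -/
theorem cantor_convex_density :
    ∀ x ∈ triadicCantor, ∃ r₀ : ℝ, 0 < r₀ ∧ ∀ r : ℝ, 0 < r → r < r₀ →
      (1 / 4 : ℝ) ≤ convDens triadicCantor x r := by
  intro x hx
  refine ⟨1, one_pos, fun r hr hr1 => ?_⟩
  obtain ⟨p, q, hp, hq, hpx, hxq, hqp, hhalf⟩ := cantor_two_points hx hr hr1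
  set S := triadicCantor ∩ closedBall x r with hS
  have hpS : p ∈ S := ⟨hp, by rw [mem_closedBall, Real.dist_eq, abs_le]; constructor <;> linarith⟩
  have hqS : q ∈ S := ⟨hq, by rw [mem_closedBall, Real.dist_eq, abs_le]; constructor <;> linarith⟩
  have hbd : Bornology.IsBounded (convexHull ℝ S) :=
    isBounded_convexHull.2 ((isBounded_closedBall (x := x) (r := r)).subset inter_subset_right)
  have hdiam : q - p ≤ Metric.diam (convexHull ℝ S) := by
    have := dist_le_diam_of_mem hbd (subset_convexHull ℝ S hpS) (subset_convexHull ℝ S hqS)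
    rw [Real.dist_eq] at this
    calc q - p ≤ |p - q| := by rw [abs_sub_comm, abs_of_nonneg (by linarith)]
    _ ≤ _ := this
  rw [convDens, le_div_iff₀ (by linarith)]
  linarith
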